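/- For j ≥ 3, the TU games (ŵ^S)_{S ∈ 2^N, S ≠ ∅} obtained as average games of the games w^S span the space spanned by the unanimity games: every average game ũ of a (j,k) simple game u is a linear combination ũ = Σ_{S⊆N} x_S ŵ^S for some real numbers x_S. -/

import Mathlib

open Finset BigOperators

attribute [local instance] Classical.propDecidable

noncomputable section

variable {n j k : ℕ}

/-- The top element `j-1` of `Fin j`. -/
def topF (j : ℕ) [NeZero j] : Fin j :=
  ⟨j - 1, Nat.sub_lt (Nat.pos_of_ne_zero (NeZero.ne j)) one_pos⟩

/-- The profile equal to the constant `c` on `S` and to `x` off `S`. -/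
def mer (S : Finset (Fin n)) (c : Fin j) (x : Fin n → Fin j) : Fin n → Fin j :=
  fun i => if i ∈ S then c else x i

/-- `(j,k)` simple game: `v 0 = 0`, `v (j-1,…,j-1) = k-1`, monotone. -/
def IsJKGame [NeZero j] [NeZero k] (v : (Fin n → Fin j) → Fin k) : Prop :=
  v (fun _ => 0) = 0 ∧ v (fun _ => topF j) = topF k ∧
    ∀ x y : Fin n → Fin j, (∀ i, x i ≤ y i) → v x ≤ v y

/-- The `(j,k)` simple game with point-veto `a`. -/
def uA [NeZero j] [NeZero k] (a : Fin n → Fin j) (x : Fin n → Fin j) : Fin k :=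
  if ∀ i, a i ≤ x i then topF k else 0

/-- The veto game associated with a set `E` of thresholds. -/
def uE [NeZero j] [NeZero k] (E : Set (Fin n → Fin j)) (x : Fin n → Fin j) : Fin k :=
  if ∃ a ∈ E, ∀ i, a i ≤ x i then topF k else 0

/-- Player `i` is a null player of `v`. -/
def NullPlayer [NeZero j] [NeZero k] (v : (Fin n → Fin j) → Fin k) (i : Fin n) : Prop :=
  ∀ (x : Fin n → Fin j) (y : Fin j), v x = v (Function.update x i y)

/-- Players `i` and `h` are equivalent in `v`. -/
def EquivPlayers [NeZero j] [NeZero k] (v : (Fin n → Fin j) → Fin k) (i h : Fin n) : Prop :=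
  ∀ x : Fin n → Fin j, v x = v (x ∘ Equiv.swap i h)

/-- The average game `ṽ(T) = (1/(jⁿ(k-1))) Σ_x [v((j-1)_T, x_{-T}) - v(0_T, x_{-T})]`. -/
def Cfun [NeZero j] [NeZero k] (v : (Fin n → Fin j) → Fin k) (T : Finset (Fin n)) : ℝ :=
  (1 / ((j : ℝ) ^ n * ((k : ℝ) - 1))) *
    ∑ x : Fin n → Fin j,
      (((v (mer T (topF j) x)).val : ℝ) - ((v (mer T 0 x)).val : ℝ))

/-- The Shapley-Shubik index for `(j,k)` simple games. -/
def Phi [NeZero j] [NeZero k] (v : (Fin n → Fin j) → Fin k) (i : Fin n) : ℝ :=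
  ∑ S ∈ univ.filter (fun S : Finset (Fin n) => i ∈ S),
    ((Nat.factorial (S.card - 1) * Nat.factorial (n - S.card) : ℝ) / (Nat.factorial n : ℝ)) *
      (Cfun v S - Cfun v (S.erase i))

/-- The TU game `v_a(S) = (1/(k-1))[v((j-1)_S, a_{-S}) - v(0_S, a_{-S})]`. -/
def vAgame [NeZero j] [NeZero k] (v : (Fin n → Fin j) → Fin k) (a : Fin n → Fin j)
    (S : Finset (Fin n)) : ℝ :=
  (1 / ((k : ℝ) - 1)) * (((v (mer S (topF j) a)).val : ℝ) - ((v (mer S 0 a)).val : ℝ))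

/-- The parametric power index `Φ^a`. -/
def PhiA [NeZero j] [NeZero k] (v : (Fin n → Fin j) → Fin k) (a : Fin n → Fin j) (i : Fin n) : ℝ :=
  ∑ S ∈ univ.filter (fun S : Finset (Fin n) => i ∈ S),
    ((Nat.factorial (S.card - 1) * Nat.factorial (n - S.card) : ℝ) / (Nat.factorial n : ℝ)) *
      (vAgame v a S - vAgame v a (S.erase i))

/-- The game `w^C`: value `k-1` iff all members of `C` give full support. -/
def wCgame [NeZero j] [NeZero k] (C : Finset (Fin n)) : (Fin n → Fin j) → Fin k :=
  uA (fun i => if i ∈ C then topF j else 0)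

/-- The unanimity TU game `γ_S`. -/
def gammaTU (S T : Finset (Fin n)) : ℝ :=
  if S ⊆ T then 1 else 0

end

/-!
Expanding `ŵ^S` in the basis of unanimity games gives
`ŵ^S = j^{-|S|} ∑_{R ⊆ S} ((j-1)^{|R|} - (-1)^{|R|}) γ_R`: the coefficient of `γ_∅` vanishes
and the diagonal coefficient is nonzero as soon as `S ≠ ∅` and `j ≥ 3`, so this triangular
system puts every `γ_R` with `R ≠ ∅` in the span of the `ŵ^S`. An average game vanishes at `∅`,
so by Möbius inversion it is a combination of exactly those `γ_R`.
-/

theorem IncidenceAlgebra.sum_Iic_sum_Iic_mu_smul {𝕜 M α : Type*} [Ring 𝕜] [AddCommGroup M]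
    [Module 𝕜 M] [PartialOrder α] [LocallyFiniteOrder α] [OrderBot α] [DecidableEq α]
    (f : α → M) (x : α) :
    ∑ y ∈ Iic x, ∑ z ∈ Iic y, IncidenceAlgebra.mu 𝕜 z y • f z = f x := by
  rw [sum_comm' (t' := Iic x) (s' := fun z => Icc z x) (fun y z => by
    simp only [mem_Iic, mem_Icc]
    exact ⟨fun h => ⟨⟨h.2, h.1⟩, h.2.trans h.1⟩, fun h => ⟨h.1.2, h.1.1⟩⟩)]
  simp only [← sum_smul, IncidenceAlgebra.sum_Icc_mu_right, ite_smul, one_smul, zero_smul,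
    sum_ite_eq', mem_Iic, le_refl, if_true]

theorem mem_span_of_eq_sum_powerset_smul {ι K M : Type*} [DecidableEq ι] [Field K]
    [AddCommGroup M] [Module K M] {F γ : Finset ι → M} (c : Finset ι → Finset ι → K)
    (hF : ∀ S, F S = ∑ R ∈ S.powerset, c S R • γ R) (hc : ∀ S, S.Nonempty → c S S ≠ 0)
    (hc_empty : ∀ S, c S ∅ = 0) {S : Finset ι} (hS : S.Nonempty) :
    γ S ∈ Submodule.span K (Set.range F) := by
  induction S using Finset.strongInduction with
  | H S ih =>
    have hγ : γ S = (c S S)⁻¹ • (F S - ∑ R ∈ S.ssubsets, c S R • γ R) := by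
      rw [hF, ← add_sum_erase _ _ (mem_powerset_self S), ← ssubsets, add_sub_cancel_right,
        smul_smul, inv_mul_cancel₀ (hc S hS), one_smul]
    rw [hγ]
    refine Submodule.smul_mem _ _ (Submodule.sub_mem _ (Submodule.subset_span ⟨S, rfl⟩)
      (Submodule.sum_mem _ fun R hR => ?_))
    obtain rfl | hR_ne := R.eq_empty_or_nonempty
    · simp [hc_empty]
    · exact Submodule.smul_mem _ _ (ih R (mem_ssubsets.1 hR) hR_ne)

theorem Fintype.sum_prod_ite_eq_card_pow {ι α R : Type*} [Fintype ι] [DecidableEq ι] [Fintype α]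
    [DecidableEq α] [CommSemiring R] (A : Finset ι) (c : α) :
    ∑ x : ι → α, ∏ i ∈ A, (if x i = c then (1 : R) else 0) = (Fintype.card α : R) ^ #Aᶜ := by
  simp_rw [← prod_ite_mem_eq A fun i => if _ = c then (1 : R) else 0]
  rw [← Fintype.prod_sum fun i y => if i ∈ A then (if y = c then (1 : R) else 0) else 1,
    ← prod_const, ← prod_ite_mem_eq Aᶜ fun _ => (Fintype.card α : R)]
  refine prod_congr _ _ fun i => ?_
  by_cases hi : i ∈ A <;> simp [hi]

theorem sum_powerset_pow_sub_neg_one_pow {ι R : Type*} [CommRing R] (a : R) (A : Finset ι) :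
    ∑ t ∈ A.powerset, (a ^ #t - (-1) ^ #t) = (a + 1) ^ #A - 0 ^ #A := by
  simpa [sum_sub_distrib] using
    congr_arg₂ (· - ·) (sum_pow_mul_eq_add_pow a 1 A) (sum_pow_mul_eq_add_pow (-1 : R) 1 A)

theorem filter_subset_powerset {ι : Type*} [DecidableEq ι] (S T : Finset ι) :
    ({R ∈ S.powerset | R ⊆ T} : Finset _) = (S ∩ T).powerset := by
  ext R
  simp only [mem_filter, mem_powerset, subset_inter_iff]

theorem pow_sub_neg_one_pow_ne_zero {R : Type*} [Ring R] [LinearOrder R] [IsStrictOrderedRing R]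
    {a : R} (ha : 1 < a) {m : ℕ} (hm : m ≠ 0) : a ^ m - (-1) ^ m ≠ 0 := by
  have h_neg_one := le_abs_self ((-1 : R) ^ m)
  rw [abs_neg_one_pow] at h_neg_one
  exact sub_ne_zero.2 (h_neg_one.trans_lt (one_lt_pow₀ ha hm)).ne'

section Games

variable {n j k : ℕ}

theorem le_topF [NeZero j] (y : Fin j) : y ≤ topF j :=
  Fin.le_def.2 (Nat.le_sub_one_of_lt y.isLt)

theorem topF_ne_zero [NeZero j] (hj : 2 ≤ j) : topF j ≠ 0 := by
  simp only [topF, ne_eq, Fin.ext_iff, Fin.val_zero]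
  omega

theorem val_topF [NeZero k] : ((topF k).val : ℝ) = k - 1 := by
  rw [topF, Nat.cast_sub (Nat.one_le_iff_ne_zero.2 (NeZero.ne k)), Nat.cast_one]

theorem mer_empty (c : Fin j) (x : Fin n → Fin j) : mer ∅ c x = x := by
  funext i
  simp [mer]

theorem Cfun_empty [NeZero j] [NeZero k] (v : (Fin n → Fin j) → Fin k) : Cfun v ∅ = 0 := by
  simp [Cfun, mer_empty]

theorem wCgame_apply [NeZero j] [NeZero k] (S : Finset (Fin n)) (y : Fin n → Fin j) :
    (wCgame S y : Fin k) = if ∀ i ∈ S, y i = topF j then topF k else 0 := by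
  have hiff : (∀ i, (if i ∈ S then topF j else 0) ≤ y i) ↔ ∀ i ∈ S, y i = topF j := by
    refine ⟨fun h i hi => le_antisymm (le_topF _) (by simpa [hi] using h i), fun h i => ?_⟩
    split_ifs with hi
    · exact (h i hi).ge
    · exact Fin.zero_le _
  simp only [wCgame, uA, hiff]

theorem val_wCgame_mer [NeZero j] [NeZero k] (S T : Finset (Fin n)) (c : Fin j)
    (x : Fin n → Fin j) :
    ((wCgame S (mer T c x) : Fin k).val : ℝ) =
      (k - 1) * ((if c = topF j then 1 else 0) ^ #(S ∩ T) *
        ∏ i ∈ S \ T, if x i = topF j then 1 else 0) := by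
  have hprod : (∏ i ∈ S, if mer T c x i = topF j then (1 : ℝ) else 0) =
      (if c = topF j then 1 else 0) ^ #(S ∩ T) * ∏ i ∈ S \ T, if x i = topF j then 1 else 0 := by
    rw [← prod_inter_mul_prod_sdiff S T, ← prod_const]
    congr 1 <;> refine prod_congr rfl fun i hi => ?_ <;> simp_all [mer]
  rw [← hprod, prod_boole, mul_boole, wCgame_apply]
  split_ifs <;> simp [val_topF]

-- `0 ^ #(S ∩ T)` is the indicator of `Disjoint S T`.
theorem Cfun_wCgame [NeZero j] [NeZero k] (hj : 2 ≤ j) (hk : 2 ≤ k) (S T : Finset (Fin n)) :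
    Cfun (wCgame S : (Fin n → Fin j) → Fin k) T =
      (1 - 0 ^ #(S ∩ T)) * ((j : ℝ)⁻¹) ^ #(S \ T) := by
  have hj0 : (j : ℝ) ≠ 0 := by positivity
  have hk1 : (k : ℝ) - 1 ≠ 0 := by
    have : (2 : ℝ) ≤ k := by exact_mod_cast hk
    linarith
  have hn : (j : ℝ) ^ n = j ^ #(S \ T)ᶜ * j ^ #(S \ T) := by
    rw [← pow_add, card_compl_add_card, Fintype.card_fin]
  have hcount := Fintype.sum_prod_ite_eq_card_pow (R := ℝ) (S \ T) (topF j)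
  rw [Fintype.card_fin] at hcount
  simp only [Cfun, val_wCgame_mer, if_neg (topF_ne_zero hj).symm, ↓reduceIte, one_pow,
    ← mul_sub, ← sub_mul, ← mul_sum, hcount, hn, inv_pow]
  field_simp

theorem sum_smul_gammaTU_apply (s : Finset (Finset (Fin n))) (m : Finset (Fin n) → ℝ)
    (T : Finset (Fin n)) : (∑ S ∈ s, m S • gammaTU S) T = ∑ S ∈ s with S ⊆ T, m S := by
  simp only [Finset.sum_apply, Pi.smul_apply, gammaTU, smul_eq_mul, mul_ite, mul_one, mul_zero,
    ← sum_filter]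

theorem mem_span_gammaTU_of_apply_empty {f : Finset (Fin n) → ℝ} (hf : f ∅ = 0) :
    f ∈ Submodule.span ℝ (gammaTU '' {S | S.Nonempty}) := by
  set m : Finset (Fin n) → ℝ := fun S => ∑ W ∈ Iic S, IncidenceAlgebra.mu ℝ W S • f W
  have hm : m ∅ = 0 := by simpa [m, ← bot_eq_empty] using hf
  have hf_eq : f = ∑ S, m S • gammaTU S := by
    ext T
    rw [sum_smul_gammaTU_apply, filter_subset_univ, ← Iic_eq_powerset,
      IncidenceAlgebra.sum_Iic_sum_Iic_mu_smul]
  rw [hf_eq]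
  refine Submodule.sum_mem _ fun S _ => ?_
  obtain rfl | hS := S.eq_empty_or_nonempty
  · simp [hm]
  · exact Submodule.smul_mem _ _ (Submodule.subset_span ⟨S, hS, rfl⟩)

theorem Cfun_wCgame_eq_sum_smul_gammaTU [NeZero j] [NeZero k] (hj : 2 ≤ j) (hk : 2 ≤ k)
    (S : Finset (Fin n)) :
    Cfun (wCgame S : (Fin n → Fin j) → Fin k) =
      ∑ R ∈ S.powerset, ((j : ℝ)⁻¹ ^ #S * ((j - 1) ^ #R - (-1) ^ #R)) • gammaTU R := by
  ext T
  have hj0 : (j : ℝ) ≠ 0 := by positivity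
  rw [sum_smul_gammaTU_apply, filter_subset_powerset, ← mul_sum,
    sum_powerset_pow_sub_neg_one_pow, sub_add_cancel, Cfun_wCgame hj hk,
    ← card_sdiff_add_card_inter S T, pow_add, mul_assoc,
    mul_sub, ← mul_pow, ← mul_pow, inv_mul_cancel₀ hj0, mul_zero, one_pow, mul_comm]

end Games

theorem stmt17_general {n j k : ℕ} [NeZero j] [NeZero k] (hj : 3 ≤ j) (hk : 2 ≤ k)
    (u : (Fin n → Fin j) → Fin k) :
    ∃ x : Finset (Fin n) → ℝ,
      ∀ T : Finset (Fin n),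
        Cfun u T =
          ∑ S : Finset (Fin n), x S * Cfun (wCgame S : (Fin n → Fin j) → Fin k) T := by
  have hspan : Submodule.span ℝ (gammaTU '' {S | S.Nonempty}) ≤
      Submodule.span ℝ (Set.range fun S => Cfun (wCgame S : (Fin n → Fin j) → Fin k)) := by
    rw [Submodule.span_le]
    rintro _ ⟨S, hS, rfl⟩
    have hj1 : (1 : ℝ) < j - 1 := by
      have : (3 : ℝ) ≤ j := by exact_mod_cast hj
      linarith
    refine mem_span_of_eq_sum_powerset_smul _ (Cfun_wCgame_eq_sum_smul_gammaTU (by omega) hk)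
      (fun R hR => mul_ne_zero (by positivity) (pow_sub_neg_one_pow_ne_zero hj1 hR.card_pos.ne'))
      (fun R => by simp) hS
  obtain ⟨x, hx⟩ := (Submodule.mem_span_range_iff_exists_fun ℝ).1
    (hspan (mem_span_gammaTU_of_apply_empty (Cfun_empty u)))
  exact ⟨x, fun T => by rw [← hx, Finset.sum_apply]; rfl⟩

theorem stmt17 {n j k : ℕ} [NeZero j] [NeZero k] (hj : 3 ≤ j) (hk : 2 ≤ k)
    (u : (Fin n → Fin j) → Fin k) (hu : IsJKGame u) :
    ∃ x : Finset (Fin n) → ℝ,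
      ∀ T : Finset (Fin n),
        Cfun u T =
          ∑ S : Finset (Fin n), x S * Cfun (wCgame S : (Fin n → Fin j) → Fin k) T :=
  stmt17_general hj hk u
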